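/- arXiv:2403.02971 — 5 statements merged into one kernel-verified Lean document; each statement's English description precedes it below -/
import Mathlib

section
/- For any points p1, p2, p3 in a metric space with distance function dist, any positive integer z, and any ε > 0, we have dist(p1,p2)^z ≤ (1+ε)^(z-1) · dist(p1,p3)^z + ((1+ε)/ε)^(z-1) · dist(p2,p3)^z. -/
/-!
By the triangle inequality it suffices to bound `(a + b) ^ z` for `a, b ≥ 0`. Writing
`a + b = l • (a / l) + m • (b / m)` with weights `l + m = 1`, convexity of `x ↦ x ^ z` gives
`(a + b) ^ z ≤ a ^ z / l ^ (z - 1) + b ^ z / m ^ (z - 1)`; the weights `l = 1 / (1 + ε)` and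
`m = ε / (1 + ε)` produce the stated constants.
-/

theorem add_pow_le_pow_div_add_pow_div {a b l m : ℝ} (ha : 0 ≤ a) (hb : 0 ≤ b) (hl : 0 < l)
    (hm : 0 < m) (hlm : l + m = 1) (n : ℕ) :
    (a + b) ^ n ≤ a ^ n / l ^ (n - 1) + b ^ n / m ^ (n - 1) := by
  rcases n with _ | k
  · norm_num
  have hconvex := (convexOn_pow (k + 1)).2 (div_nonneg ha hl.le) (div_nonneg hb hm.le)
    hl.le hm.le hlm
  simp only [smul_eq_mul, mul_div_cancel₀ _ hl.ne', mul_div_cancel₀ _ hm.ne'] at hconvex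
  refine hconvex.trans_eq ?_
  rw [Nat.add_sub_cancel, div_pow, div_pow, pow_succ l, pow_succ m]
  field_simp

theorem add_pow_le_one_add_pow_mul_add {a b ε : ℝ} (ha : 0 ≤ a) (hb : 0 ≤ b) (hε : 0 < ε)
    (n : ℕ) :
    (a + b) ^ n ≤ (1 + ε) ^ (n - 1) * a ^ n + ((1 + ε) / ε) ^ (n - 1) * b ^ n := by
  have h := add_pow_le_pow_div_add_pow_div ha hb (inv_pos.2 (by positivity : 0 < 1 + ε))
    (by positivity : 0 < ε / (1 + ε)) (by field_simp) n
  rwa [inv_pow, div_inv_eq_mul, mul_comm, div_eq_inv_mul (b ^ n), ← inv_pow, inv_div] at h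

theorem stmt_0_general {X : Type*} [MetricSpace X] (p1 p2 p3 : X) (z : ℕ)
    (ε : ℝ) (hε : 0 < ε) :
    dist p1 p2 ^ z ≤ (1 + ε) ^ (z - 1) * dist p1 p3 ^ z
      + ((1 + ε) / ε) ^ (z - 1) * dist p2 p3 ^ z :=
  (pow_le_pow_left₀ dist_nonneg (dist_triangle_right p1 p2 p3) z).trans
    (add_pow_le_one_add_pow_mul_add dist_nonneg dist_nonneg hε z)

theorem stmt_0 {X : Type*} [MetricSpace X] (p1 p2 p3 : X) (z : ℕ) (hz : 0 < z)
    (ε : ℝ) (hε : 0 < ε) :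
    dist p1 p2 ^ z ≤ (1 + ε) ^ (z - 1) * dist p1 p3 ^ z
      + ((1 + ε) / ε) ^ (z - 1) * dist p2 p3 ^ z :=
  stmt_0_general p1 p2 p3 z ε hε
end

section
/- For any real z with 0 < z ≤ 2 and any x ∈ [0, 1/2], we have 1 − (z/2)·x − z·(1 − z/2)·x² ≤ (1−x)^(z/2) ≤ 1 − (z/2)·x. -/
theorem stmt_2 (z x : ℝ) (hz0 : 0 < z) (hz2 : z ≤ 2) (hx0 : 0 ≤ x) (hx : x ≤ 1/2) :
    1 - z/2 * x - z * (1 - z/2) * x^2 ≤ (1 - x) ^ (z/2) ∧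
      (1 - x) ^ (z/2) ≤ 1 - z/2 * x := by
  set p : ℝ := z/2 with hp
  have hp0 : 0 < p := by positivity
  have hp1 : p ≤ 1 := by rw [hp]; linarith
  have h1x : 0 < 1 - x := by linarith
  have hs : (-1 : ℝ) ≤ -x := by linarith
  have hupper : (1 - x) ^ p ≤ 1 - p * x := by
    have := rpow_one_add_le_one_add_mul_self hs hp0.le hp1
    simpa [sub_eq_add_neg, mul_comm] using this
  constructor
  · -- lower bound
    set q : ℝ := 1 - p with hq
    have hq0 : 0 ≤ q := by linarith
    have hq1 : q ≤ 1 := by linarith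
    have hA : z * (1 - z/2) = 2 * p * q := by rw [hq, hp]; ring
    rw [hA]
    set A : ℝ := 1 - p * x - 2 * p * q * x^2 with hAdef
    rcases le_or_gt A 0 with h | h
    · calc A ≤ 0 := h
        _ ≤ (1 - x) ^ p := Real.rpow_nonneg h1x.le _
    · have hqpow : (1 - x) ^ q ≤ 1 - q * x := by
        have := rpow_one_add_le_one_add_mul_self hs hq0 hq1
        simpa [sub_eq_add_neg, mul_comm] using this
      have hqpos : 0 < (1 - x) ^ q := Real.rpow_pos_of_pos h1x _
      have key : A * (1 - x) ^ q ≤ (1 - x) ^ p * (1 - x) ^ q := by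
        have h2 : A * (1 - x) ^ q ≤ A * (1 - q * x) :=
          mul_le_mul_of_nonneg_left hqpow h.le
        have h3 : A * (1 - q * x) ≤ 1 - x := by
          nlinarith [mul_nonneg (mul_nonneg (mul_nonneg hp0.le hq0) (sq_nonneg x))
            (sub_nonneg.2 (by nlinarith : 2 * q * x ≤ 1)), sq_nonneg x]
        have h4 : (1 - x) ^ p * (1 - x) ^ q = 1 - x := by
          rw [← Real.rpow_add h1x]
          simp [hq]
        linarith
      exact le_of_mul_le_mul_right key hqpos
  · simpa [mul_comm] using hupper
end

section
/- Let P = {p_1,...,p_n} and Q = {q_1,...,q_n} be orthonormal sets in R^d with 100 ≤ n ≤ d/2, and let U = PᵀQ. Suppose there exists a partial coloring ζ ∈ {−1,0,+1}^n with |{i : ζ_i = 0}| ≤ n/4 and |Σ_j ζ_j U_{ij}| ≤ 1/2 for all i. Then the unit vector c obtained by normalizing Q·ζ/√n (extended to unit norm via a direction orthogonal to both spans, which exists since d > 2n) satisfies Σ_{i=1}^n |⟨q_i, c⟩| − Σ_{i=1}^n |⟨p_i, c⟩| ≥ (1/4)√n. -/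
/-!
The vector `c₀ = (∑_j ζ_j q_j) / √n` has `⟨q_i, c₀⟩ = ζ_i / √n` and
`⟨p_i, c₀⟩ = (∑_j ζ_j U_ij) / √n`, so the coloring hypotheses give
`∑ |⟨q_i, c₀⟩| ≥ (3/4)√n` and `∑ |⟨p_i, c₀⟩| ≤ (1/2)√n`. Since `‖c₀‖² = ‖ζ‖²/n ≤ 1` and the
`p_i, q_i` span at most `2n < d` dimensions, adding a multiple of a unit vector orthogonal to all
of them makes `c₀` a unit vector without changing any of these inner products.
-/

open scoped RealInnerProductSpace
open Module

section UnitExtension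

variable {E : Type*} [NormedAddCommGroup E] [InnerProductSpace ℝ E] [FiniteDimensional ℝ E]

theorem Submodule.exists_mem_orthogonal_norm_eq_one (S : Submodule ℝ E)
    (hS : finrank ℝ S < finrank ℝ E) : ∃ w ∈ Sᗮ, ‖w‖ = 1 := by
  have : Nontrivial Sᗮ := Module.finrank_pos_iff (R := ℝ) |>.mp <| by
    have := S.finrank_add_finrank_orthogonal
    omega
  obtain ⟨w, hw⟩ := exists_norm_eq Sᗮ zero_le_one
  exact ⟨w, w.2, hw⟩

theorem Submodule.exists_norm_eq_one_inner_eq (S : Submodule ℝ E)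
    (hS : finrank ℝ S < finrank ℝ E) {x : E} (hxS : x ∈ S) (hx : ‖x‖ ≤ 1) :
    ∃ c : E, ‖c‖ = 1 ∧ ∀ s ∈ S, ⟪s, c⟫ = ⟪s, x⟫ := by
  obtain ⟨w, hwS, hw⟩ := S.exists_mem_orthogonal_norm_eq_one hS
  have hperp : ∀ s ∈ S, ⟪s, w⟫ = 0 := (S.mem_orthogonal w).mp hwS
  set t := √(1 - ‖x‖ ^ 2)
  refine ⟨x + t • w, ?_, fun s hs => ?_⟩
  · have hsq : ‖x + t • w‖ ^ 2 = 1 := by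
      rw [norm_add_sq_real, real_inner_smul_right, hperp x hxS, norm_smul, mul_pow, hw,
        Real.norm_eq_abs, sq_abs, Real.sq_sqrt (by nlinarith [norm_nonneg x])]
      ring
    exact (pow_eq_one_iff_of_nonneg (norm_nonneg _) two_ne_zero).mp hsq
  · simp [inner_add_right, real_inner_smul_right, hperp s hs]

theorem exists_norm_eq_one_inner_eq_of_two_mul_card_lt {ι : Type*} [Fintype ι]
    (p q : ι → E) (h : 2 * Fintype.card ι < finrank ℝ E)
    {x : E} (hxq : x ∈ Submodule.span ℝ (Set.range q)) (hx : ‖x‖ ≤ 1) :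
    ∃ c : E, ‖c‖ = 1 ∧ (∀ i, ⟪p i, c⟫ = ⟪p i, x⟫) ∧ ∀ i, ⟪q i, c⟫ = ⟪q i, x⟫ := by
  set S := Submodule.span ℝ (Set.range (Sum.elim p q))
  have hS : finrank ℝ S < finrank ℝ E := by
    have : finrank ℝ S ≤ Fintype.card ι + Fintype.card ι := by
      simpa [Set.finrank] using finrank_range_le_card (R := ℝ) (Sum.elim p q)
    omega
  have hxS : x ∈ S := Submodule.span_mono (by simp) hxq
  obtain ⟨c, hc, hcS⟩ := S.exists_norm_eq_one_inner_eq hS hxS hx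
  exact ⟨c, hc, fun i => hcS _ (Submodule.subset_span ⟨Sum.inl i, rfl⟩),
    fun i => hcS _ (Submodule.subset_span ⟨Sum.inr i, rfl⟩)⟩

end UnitExtension

theorem Orthonormal.norm_sum_smul {E ι : Type*} [NormedAddCommGroup E] [InnerProductSpace ℝ E]
    [Fintype ι] {v : ι → E} (hv : Orthonormal ℝ v) (l : ι → ℝ) :
    ‖∑ i, l i • v i‖ = √(∑ i, l i ^ 2) := by
  rw [norm_eq_sqrt_real_inner, hv.inner_sum]
  simp [sq]

theorem sum_abs_eq_card_sub_ncard_zero {ι : Type*} [Fintype ι] {ζ : ι → ℝ}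
    (hζ : ∀ i, ζ i = -1 ∨ ζ i = 0 ∨ ζ i = 1) :
    ∑ i, |ζ i| = Fintype.card ι - {i | ζ i = 0}.ncard := by
  classical
  have habs : ∀ i, |ζ i| = 1 - if ζ i = 0 then 1 else 0 := by
    intro i; rcases hζ i with h | h | h <;> simp [h]
  simp [habs, Finset.sum_sub_distrib, Finset.sum_boole, Set.ncard_eq_toFinset_card']

theorem sum_sq_le_card {ι : Type*} [Fintype ι] {ζ : ι → ℝ}
    (hζ : ∀ i, ζ i = -1 ∨ ζ i = 0 ∨ ζ i = 1) :
    ∑ i, ζ i ^ 2 ≤ Fintype.card ι := by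
  have h : ∀ i, ζ i ^ 2 ≤ 1 := fun i => by rcases hζ i with h | h | h <;> simp [h]
  simpa using Finset.sum_le_sum fun i (_ : i ∈ Finset.univ) => h i

theorem stmt_7_general {d n : ℕ} (hd : 2 * n < d)
    (p q : Fin n → EuclideanSpace ℝ (Fin d))
    (hq : Orthonormal ℝ q)
    (ζ : Fin n → ℝ) (hζ : ∀ i, ζ i = -1 ∨ ζ i = 0 ∨ ζ i = 1)
    (hζ0 : ({i : Fin n | ζ i = 0}.ncard : ℝ) ≤ (n : ℝ) / 4)
    (hdisc : ∀ i, |∑ j, ζ j * ⟪p i, q j⟫| ≤ 1/2) :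
    ∃ c : EuclideanSpace ℝ (Fin d), ‖c‖ = 1 ∧
      (1/4) * Real.sqrt n ≤ (∑ i, |⟪q i, c⟫|) - ∑ i, |⟪p i, c⟫| := by
  set c₀ := (√n)⁻¹ • ∑ j, ζ j • q j
  have hc₀q : c₀ ∈ Submodule.span ℝ (Set.range q) :=
    Submodule.smul_mem _ _ <| Submodule.sum_mem _ fun j _ =>
      Submodule.smul_mem _ _ (Submodule.subset_span ⟨j, rfl⟩)
  have hc₀ : ‖c₀‖ ≤ 1 := by
    rw [norm_smul, hq.norm_sum_smul, norm_inv, Real.norm_of_nonneg (Real.sqrt_nonneg _)]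
    exact inv_mul_le_one_of_le₀ (Real.sqrt_le_sqrt (by simpa using sum_sq_le_card hζ))
      (Real.sqrt_nonneg _)
  obtain ⟨c, hc, hpc, hqc⟩ := exists_norm_eq_one_inner_eq_of_two_mul_card_lt p q
    (by simpa [finrank_euclideanSpace] using hd) hc₀q hc₀
  refine ⟨c, hc, ?_⟩
  simp only [hpc, hqc, c₀, real_inner_smul_right, hq.inner_right_fintype, inner_sum,
    inv_mul_eq_div, abs_div, abs_of_nonneg (Real.sqrt_nonneg _), ← Finset.sum_div, ← sub_div]
  have hζ_sum : 3 / 4 * n ≤ ∑ i, |ζ i| := by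
    rw [sum_abs_eq_card_sub_ncard_zero hζ, Fintype.card_fin]
    linarith
  have hdisc_sum : ∑ i, |∑ j, ζ j * ⟪p i, q j⟫| ≤ n / 2 := by
    simpa [div_eq_mul_inv] using Finset.sum_le_sum fun i (_ : i ∈ Finset.univ) => hdisc i
  calc (1/4) * √n = (1 / 4 * n) / √n := by rw [mul_div_assoc, Real.div_sqrt]
    _ ≤ _ := by gcongr; linarith

theorem stmt_7 {d n : ℕ} (hn : 100 ≤ n) (hd : 2 * n < d)
    (p q : Fin n → EuclideanSpace ℝ (Fin d))
    (hp : Orthonormal ℝ p) (hq : Orthonormal ℝ q)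
    (ζ : Fin n → ℝ) (hζ : ∀ i, ζ i = -1 ∨ ζ i = 0 ∨ ζ i = 1)
    (hζ0 : ({i : Fin n | ζ i = 0}.ncard : ℝ) ≤ (n : ℝ) / 4)
    (hdisc : ∀ i, |∑ j, ζ j * ⟪p i, q j⟫| ≤ 1/2) :
    ∃ c : EuclideanSpace ℝ (Fin d), ‖c‖ = 1 ∧
      (1/4) * Real.sqrt n ≤ (∑ i, |⟪q i, c⟫|) - ∑ i, |⟪p i, c⟫| :=
  stmt_7_general hd p q hq ζ hζ hζ0 hdisc
end

section
/- Let P = {p_1,...,p_n} and Q = {q_1,...,q_n} be orthonormal sets in R^d with 2n < d, and suppose there is a unit vector ĉ with Σ_i |⟨p_i, ĉ⟩| − Σ_i |⟨q_i, ĉ⟩| > (1/2)√n. Then for 0 < z ≤ 2 there exists a unit vector c with Σ_{i=1}^n (2 − 2|⟨q_i,c⟩|)^{z/2} − Σ_{i=1}^n (2 − 2|⟨p_i,c⟩|)^{z/2} ≥ 2^{z/2}·(z/8)·√n − 2^{z/2}·(z/4)·(1 − z/2). -/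
/-!
Put `c = ĉ / 2 + c̄` with `c̄` orthogonal to all `pᵢ, qᵢ` and completing `c` to a unit vector;
this is possible because the `pᵢ, qᵢ` span a proper subspace when `2n < d`. Then
`|⟪pᵢ, c⟫|, |⟪qᵢ, c⟫| ≤ 1/2`, and with `s = z/2` Bernoulli's inequality
`(1 - x)^s ≤ 1 - s x` bounds the `p`-terms from above, while its second-order companion
`(1 - x)^s ≥ 1 - s x - 2s(1 - s) x²` on `[0, 1/2]` bounds the `q`-terms from below. The linear
terms contribute `s` times half the gap, more than `z √n / 8`, and by Bessel's inequality
`∑ ⟪qᵢ, c⟫² ≤ ‖ĉ / 2‖² = 1/4` the quadratic terms lose at most `z (1 - z/2) / 4`.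
-/

open scoped RealInnerProductSpace

open Finset Module Submodule

theorem rpow_one_sub_le_one_sub_mul {x s : ℝ} (hx : x ≤ 1) (hs0 : 0 ≤ s) (hs1 : s ≤ 1) :
    (1 - x) ^ s ≤ 1 - s * x := by
  simpa [sub_eq_add_neg] using rpow_one_add_le_one_add_mul_self (s := -x) (by linarith) hs0 hs1

/-- Writing `(1 - x) ^ s = (1 - x) / (1 - x) ^ (1 - s)` turns the upper bound for the exponent
`1 - s` into a lower bound for the exponent `s`. -/
theorem one_sub_mul_sub_le_rpow_one_sub {x s : ℝ} (hx0 : 0 ≤ x) (hx1 : x ≤ 1 / 2)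
    (hs0 : 0 ≤ s) (hs1 : s ≤ 1) :
    1 - s * x - 2 * s * (1 - s) * x ^ 2 ≤ (1 - x) ^ s := by
  have hpos : 0 < 1 - x := by linarith
  have hden : 0 < 1 - (1 - s) * x := by nlinarith
  have hdual : (1 - x) ^ (1 - s) ≤ 1 - (1 - s) * x :=
    rpow_one_sub_le_one_sub_mul (by linarith) (by linarith) (by linarith)
  have hsplit : (1 - x) ^ s = (1 - x) / (1 - x) ^ (1 - s) := by
    rw [eq_div_iff (Real.rpow_pos_of_pos hpos _).ne', ← Real.rpow_add hpos, add_sub_cancel,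
      Real.rpow_one]
  calc 1 - s * x - 2 * s * (1 - s) * x ^ 2 ≤ (1 - x) / (1 - (1 - s) * x) := by
        rw [le_div_iff₀ hden]
        have hcubic : 0 ≤ s * (1 - s) * x ^ 2 * (1 - 2 * (1 - s) * x) := by
          have hx : 0 ≤ 1 - 2 * (1 - s) * x := by nlinarith
          have hs : 0 ≤ s * (1 - s) := mul_nonneg hs0 (by linarith)
          positivity
        nlinarith
    _ ≤ (1 - x) ^ s := by
        rw [hsplit]
        exact div_le_div_of_nonneg_left hpos.le (Real.rpow_pos_of_pos hpos _) hdual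

theorem le_sum_rpow_one_sub_sub_sum_rpow_one_sub {ι : Type*} (t : Finset ι) {a b : ι → ℝ}
    (ha : ∀ i ∈ t, a i ≤ 1) (hb0 : ∀ i ∈ t, 0 ≤ b i) (hb1 : ∀ i ∈ t, b i ≤ 1 / 2)
    {s : ℝ} (hs0 : 0 ≤ s) (hs1 : s ≤ 1) :
    s * (∑ i ∈ t, a i - ∑ i ∈ t, b i) - 2 * s * (1 - s) * ∑ i ∈ t, b i ^ 2
      ≤ ∑ i ∈ t, (1 - b i) ^ s - ∑ i ∈ t, (1 - a i) ^ s := by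
  have hb : ∑ i ∈ t, (1 - s * b i - 2 * s * (1 - s) * b i ^ 2) ≤ ∑ i ∈ t, (1 - b i) ^ s :=
    sum_le_sum fun i hi => one_sub_mul_sub_le_rpow_one_sub (hb0 i hi) (hb1 i hi) hs0 hs1
  have ha : ∑ i ∈ t, (1 - a i) ^ s ≤ ∑ i ∈ t, (1 - s * a i) :=
    sum_le_sum fun i hi => rpow_one_sub_le_one_sub_mul (ha i hi) hs0 hs1
  simp only [sum_sub_distrib, ← mul_sum] at ha hb
  linarith

theorem sum_two_sub_two_mul_rpow {ι : Type*} (t : Finset ι) {a : ι → ℝ} (ha : ∀ i ∈ t, a i ≤ 1)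
    (s : ℝ) : ∑ i ∈ t, (2 - 2 * a i) ^ s = 2 ^ s * ∑ i ∈ t, (1 - a i) ^ s := by
  rw [mul_sum]
  refine sum_congr rfl fun i hi => ?_
  rw [← Real.mul_rpow zero_le_two (by linarith [ha i hi])]
  ring_nf

theorem span_range_ne_top_of_card_lt {K V ι : Type*} [DivisionRing K] [AddCommGroup V]
    [Module K V] [Fintype ι] (v : ι → V) (h : Fintype.card ι < finrank K V) :
    span K (Set.range v) ≠ ⊤ := by
  intro htop
  have := finrank_range_le_card (R := K) v
  rw [Set.finrank, htop, finrank_top] at this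
  omega

section InnerProductSpace

variable {E : Type*} [NormedAddCommGroup E] [InnerProductSpace ℝ E]

/-- Add to the projection of `w` on `K` a vector of `Kᗮ` of the missing length. -/
theorem exists_norm_eq_one_sub_mem_orthogonal (K : Submodule ℝ E) [K.HasOrthogonalProjection]
    (hK : K ≠ ⊤) {w : E} (hw : ‖w‖ ≤ 1) : ∃ c : E, ‖c‖ = 1 ∧ c - w ∈ Kᗮ := by
  have : Nontrivial Kᗮ := nontrivial_iff_ne_bot.2 (by rwa [Ne, orthogonal_eq_bot_iff])
  set v := K.starProjection w
  have hv : ‖v‖ ^ 2 ≤ 1 := by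
    nlinarith [K.norm_starProjection_apply_le w, norm_nonneg v]
  obtain ⟨x, hx⟩ := exists_norm_eq Kᗮ (Real.sqrt_nonneg (1 - ‖v‖ ^ 2))
  refine ⟨v + x, ?_, ?_⟩
  · have horth : ⟪v, (x : E)⟫ = 0 :=
      inner_right_of_mem_orthogonal (K.starProjection_apply_mem w) x.2
    have : ‖v + x‖ ^ 2 = 1 := by
      rw [norm_add_sq_real, horth, norm_coe, hx, Real.sq_sqrt (by linarith)]
      ring
    nlinarith [norm_nonneg (v + x)]
  · rw [show v + x - w = (x : E) - (w - v) by abel]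
    exact sub_mem x.2 (K.sub_starProjection_mem_orthogonal w)

theorem exists_norm_eq_one_forall_inner_eq [FiniteDimensional ℝ E] {ι : Type*} [Fintype ι]
    (v : ι → E) (hcard : Fintype.card ι < finrank ℝ E) {w : E} (hw : ‖w‖ ≤ 1) :
    ∃ c : E, ‖c‖ = 1 ∧ ∀ i, ⟪v i, c⟫ = ⟪v i, w⟫ := by
  obtain ⟨c, hc, hcw⟩ :=
    exists_norm_eq_one_sub_mem_orthogonal _ (span_range_ne_top_of_card_lt v hcard) hw
  refine ⟨c, hc, fun i => ?_⟩
  rw [← sub_eq_zero, ← inner_sub_right]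
  exact inner_right_of_mem_orthogonal (subset_span (Set.mem_range_self i)) hcw

end InnerProductSpace

theorem stmt_8 {d n : ℕ} (hd : 2 * n < d)
    (p q : Fin n → EuclideanSpace ℝ (Fin d))
    (hp : Orthonormal ℝ p) (hq : Orthonormal ℝ q)
    (chat : EuclideanSpace ℝ (Fin d)) (hchat : ‖chat‖ = 1)
    (hgap : (1/2) * Real.sqrt n < (∑ i, |⟪p i, chat⟫|) - ∑ i, |⟪q i, chat⟫|)
    (z : ℝ) (hz0 : 0 < z) (hz2 : z ≤ 2) :
    ∃ c : EuclideanSpace ℝ (Fin d), ‖c‖ = 1 ∧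
      (2:ℝ)^(z/2) * (z/8) * Real.sqrt n - (2:ℝ)^(z/2) * (z/4) * (1 - z/2)
        ≤ (∑ i, (2 - 2 * |⟪q i, c⟫|) ^ (z/2)) - ∑ i, (2 - 2 * |⟪p i, c⟫|) ^ (z/2) := by
  set w : EuclideanSpace ℝ (Fin d) := (1 / 2 : ℝ) • chat
  have hw : ‖w‖ = 1 / 2 := by simp [w, norm_smul, hchat]
  obtain ⟨c, hc, hcw⟩ := exists_norm_eq_one_forall_inner_eq (Sum.elim p q)
    (by simpa [two_mul] using hd) (hw.trans_le (by norm_num))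
  have hpc i : ⟪p i, c⟫ = ⟪p i, w⟫ := hcw (Sum.inl i)
  have hqc i : ⟪q i, c⟫ = ⟪q i, w⟫ := hcw (Sum.inr i)
  have hpw i : |⟪p i, w⟫| ≤ 1 / 2 := by
    simpa [hp.1 i, hw] using abs_real_inner_le_norm (p i) w
  have hqw i : |⟪q i, w⟫| ≤ 1 / 2 := by
    simpa [hq.1 i, hw] using abs_real_inner_le_norm (q i) w
  have hbessel : ∑ i, |⟪q i, w⟫| ^ 2 ≤ 1 / 4 := by
    simpa only [Real.norm_eq_abs] using
      (hq.sum_inner_products_le (s := univ) w).trans_eq (by rw [hw]; norm_num)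
  have hgap' : √n / 4 < ∑ i, |⟪p i, w⟫| - ∑ i, |⟪q i, w⟫| := by
    simp only [w, real_inner_smul_right, abs_mul, ← mul_sum, ← mul_sub]
    rw [abs_of_pos one_half_pos]
    linarith
  refine ⟨c, hc, ?_⟩
  simp only [hpc, hqc]
  rw [sum_two_sub_two_mul_rpow _ (fun i _ => (hpw i).trans (by norm_num)),
    sum_two_sub_two_mul_rpow _ (fun i _ => (hqw i).trans (by norm_num)), ← mul_sub,
    mul_assoc, mul_assoc, ← mul_sub]
  gcongr 2 ^ (z / 2) * ?_
  have hz : 0 ≤ 2 * (z / 2) * (1 - z / 2) := by nlinarith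
  calc z / 8 * √n - z / 4 * (1 - z / 2)
      ≤ z / 2 * (∑ i, |⟪p i, w⟫| - ∑ i, |⟪q i, w⟫|)
        - 2 * (z / 2) * (1 - z / 2) * ∑ i, |⟪q i, w⟫| ^ 2 := by
        nlinarith [mul_le_mul_of_nonneg_left hbessel hz, mul_le_mul_of_nonneg_left hgap'.le hz0.le]
    _ ≤ _ := le_sum_rpow_one_sub_sub_sum_rpow_one_sub univ
        (fun i _ => (hpw i).trans (by norm_num)) (fun i _ => abs_nonneg _) (fun i _ => hqw i)
        (by linarith) (by linarith)
end

section
/- Let α_s = [2(1 − 10^{-4}/16)·exp(−(2s−1)²/(8·10^{-2})) + 2·(10^{-4}/16)·exp(−(2s−1)²/8)]·2^{s+1} for positive integers s. Then α_1 ≤ 10^{-4}, α_s/α_{s+1} ≥ e/2 for all s ≥ 1, and Σ_{s=1}^∞ [ent(α_s) + α_s] ≤ 0.03, where ent(α) = −α log₂ α − (1−α) log₂(1−α) is the binary entropy function. -/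
/-!
Each Gaussian factor in `alphaSeq` shrinks by at least `e⁻¹` per step, since
`(2s+1)² - (2s-1)² = 8s` and both widths `0.08` and `8` are at most `8s`, so `α_{s+1} ≤ 10⁻⁴ (2/e)^s`.
Since binary entropy increases on `[0, 1/2]` and `-(1-t) log(1-t) ≤ t`, the `s`-th term is at most
`t (log t⁻¹ + 1) / log 2 + t` with `t = 10⁻⁴ (2/e)^s`; as `log t⁻¹` is affine in `s`, the sum is
dominated by an arithmetico-geometric series of ratio `2/e ≤ 3/4`.
-/

/-- The binary entropy function. -/
noncomputable def binEnt (α : ℝ) : ℝ :=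
  -α * Real.logb 2 α - (1 - α) * Real.logb 2 (1 - α)

/-- The sequence α_s from the partial-coloring argument. -/
noncomputable def alphaSeq (s : ℕ) : ℝ :=
  (2 * (1 - 1e-4/16) * Real.exp (-(2*(s:ℝ) - 1)^2 / (8 * 1e-2))
    + 2 * (1e-4/16) * Real.exp (-(2*(s:ℝ) - 1)^2 / 8)) * 2^(s+1)

open Real

lemma binEnt_eq_binEntropy_div (x : ℝ) : binEnt x = binEntropy x / log 2 := by
  simp only [binEnt, binEntropy, logb, log_inv]
  ring

lemma binEntropy_le_mul_log_inv_add_self {t : ℝ} (ht : t ≤ 1) :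
    binEntropy t ≤ t * log t⁻¹ + t := by
  have h := negMulLog_le_one_sub_self (sub_nonneg.2 ht)
  rw [binEntropy_eq_negMulLog_add_negMulLog_one_sub, negMulLog, log_inv]
  linarith

lemma binEnt_add_self_le {x t : ℝ} (hx : 0 ≤ x) (hxt : x ≤ t) (ht : t ≤ 2⁻¹) :
    binEnt x + x ≤ t * (log t⁻¹ + 1) / log 2 + t := by
  have hmono : binEntropy x ≤ binEntropy t :=
    binEntropy_strictMonoOn.monotoneOn ⟨hx, hxt.trans ht⟩ ⟨hx.trans hxt, ht⟩ hxt
  have hbound := binEntropy_le_mul_log_inv_add_self (t := t) (by linarith)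
  rw [binEnt_eq_binEntropy_div, mul_add, mul_one]
  gcongr
  exact hmono.trans hbound

lemma binEnt_nonneg {x : ℝ} (hx₀ : 0 ≤ x) (hx₁ : x ≤ 1) : 0 ≤ binEnt x := by
  rw [binEnt_eq_binEntropy_div]
  exact div_nonneg (binEntropy_nonneg hx₀ hx₁) (log_nonneg one_le_two)

lemma two_div_exp_one_le : 2 / exp 1 ≤ 3 / 4 := by
  rw [div_le_iff₀ (exp_pos 1)]
  linarith [exp_one_gt_d9]

lemma two_div_exp_one_pow_le_one (s : ℕ) : (2 / exp 1) ^ s ≤ 1 :=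
  pow_le_one₀ (by positivity) (two_div_exp_one_le.trans (by norm_num))

lemma alphaSeq_pos (s : ℕ) : 0 < alphaSeq s := by
  unfold alphaSeq
  positivity

lemma alphaSeq_one_le : alphaSeq 1 ≤ 1e-4 := by
  have hexp12 : 160000 ≤ exp 12 := by
    have h := pow_le_pow_left₀ (by norm_num) exp_one_gt_d9.le 12
    rw [← exp_nat_mul] at h
    norm_num at h ⊢
    linarith
  have hsteep : exp (-(25 / 2)) ≤ 1 / 160000 := by
    calc exp (-(25 / 2)) ≤ exp (-12) := exp_le_exp.2 (by norm_num)
      _ = (exp 12)⁻¹ := exp_neg 12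
      _ ≤ 1 / 160000 := by rw [one_div]; exact inv_anti₀ (by norm_num) hexp12
  have hflat : exp (-(1 / 8)) ≤ 1 := exp_le_one_iff.2 (by norm_num)
  norm_num [alphaSeq]
  linarith

lemma exp_one_mul_exp_neg_sq_succ_le {c x : ℝ} (hc : 0 < c) (hcx : c ≤ 8 * x) :
    exp 1 * exp (-(2 * (x + 1) - 1) ^ 2 / c) ≤ exp (-(2 * x - 1) ^ 2 / c) := by
  rw [← exp_add, exp_le_exp, ← sub_nonneg]
  have hgap : -(2 * x - 1) ^ 2 / c - (1 + -(2 * (x + 1) - 1) ^ 2 / c) = (8 * x - c) / c := by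
    field_simp
    ring
  rw [hgap]
  exact div_nonneg (by linarith) hc.le

lemma exp_one_mul_alphaSeq_succ_le {s : ℕ} (hs : 1 ≤ s) :
    exp 1 * alphaSeq (s + 1) ≤ 2 * alphaSeq s := by
  have hs' : (1 : ℝ) ≤ s := by exact_mod_cast hs
  have hnarrow := exp_one_mul_exp_neg_sq_succ_le (c := 8 * 1e-2) (x := s) (by norm_num) (by linarith)
  have hwide := exp_one_mul_exp_neg_sq_succ_le (c := 8) (x := s) (by norm_num) (by linarith)
  have hpow : (0 : ℝ) ≤ 2 ^ (s + 1) := by positivity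
  unfold alphaSeq
  push_cast
  rw [pow_succ (2 : ℝ) (s + 1)]
  nlinarith [mul_le_mul_of_nonneg_left hnarrow hpow, mul_le_mul_of_nonneg_left hwide hpow]

lemma alphaSeq_succ_le (s : ℕ) : alphaSeq (s + 1) ≤ 1e-4 * (2 / exp 1) ^ s := by
  induction s with
  | zero => simpa using alphaSeq_one_le
  | succ n ih =>
    have hstep : alphaSeq (n + 2) ≤ 2 / exp 1 * alphaSeq (n + 1) := by
      rw [div_mul_eq_mul_div, le_div_iff₀ (exp_pos 1), mul_comm]
      exact exp_one_mul_alphaSeq_succ_le (by omega)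
    calc alphaSeq (n + 2) ≤ 2 / exp 1 * (1e-4 * (2 / exp 1) ^ n) := by
          refine hstep.trans ?_
          gcongr
      _ = 1e-4 * (2 / exp 1) ^ (n + 1) := by ring

lemma alphaSeq_succ_le_ten_pow_neg_four (s : ℕ) : alphaSeq (s + 1) ≤ 1e-4 := by
  nlinarith [alphaSeq_succ_le s, two_div_exp_one_pow_le_one s]

lemma binEnt_alphaSeq_succ_add_le (s : ℕ) :
    binEnt (alphaSeq (s + 1)) + alphaSeq (s + 1) ≤ 5e-5 * ((33 + s) * (2 / exp 1) ^ s) := by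
  set r := 2 / exp 1
  have hr₀ : 0 ≤ r := by positivity
  have hlog_inv : log (1e-4 * r ^ s)⁻¹ = log 1e4 + s * (1 - log 2) := by
    rw [log_inv, log_mul (by norm_num) (by positivity), log_pow,
      log_div two_ne_zero (exp_ne_zero 1), log_exp, show (1e-4 : ℝ) = 1e4⁻¹ by norm_num, log_inv]
    ring
  have hlog_1e4 : log 1e4 ≤ 14 * log 2 := by
    calc log 1e4 ≤ log (2 ^ 14) := log_le_log (by norm_num) (by norm_num)
      _ = 14 * log 2 := by rw [log_pow]; norm_num
  have hlog_two : 2 / 3 ≤ log 2 := by linarith [log_two_gt_d9]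
  calc binEnt (alphaSeq (s + 1)) + alphaSeq (s + 1)
      ≤ 1e-4 * r ^ s * (log (1e-4 * r ^ s)⁻¹ + 1) / log 2 + 1e-4 * r ^ s :=
        binEnt_add_self_le (alphaSeq_pos _).le (alphaSeq_succ_le s)
          (by linarith [two_div_exp_one_pow_le_one s])
    _ ≤ 5e-5 * ((33 + s) * r ^ s) := by
      rw [hlog_inv, div_add' _ _ _ (log_pos one_lt_two).ne', div_le_iff₀ (log_pos one_lt_two)]
      nlinarith [mul_nonneg (pow_nonneg hr₀ s) (sub_nonneg.2 hlog_1e4),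
        mul_nonneg (mul_nonneg (pow_nonneg hr₀ s) (by positivity : (0 : ℝ) ≤ 1 + s))
          (sub_nonneg.2 hlog_two)]

lemma hasSum_add_coe_mul_geometric (a : ℝ) {r : ℝ} (hr₀ : 0 ≤ r) (hr₁ : r < 1) :
    HasSum (fun n : ℕ ↦ (a + n) * r ^ n) (a / (1 - r) + r / (1 - r) ^ 2) := by
  have hgeom := (hasSum_geometric_of_lt_one hr₀ hr₁).mul_left a
  have harith := hasSum_coe_mul_geometric_of_norm_lt_one (r := r) (by rwa [norm_of_nonneg hr₀])
  simpa only [add_mul, div_eq_mul_inv] using hgeom.add harith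

theorem stmt_15 :
    alphaSeq 1 ≤ 1e-4 ∧
    (∀ s : ℕ, 1 ≤ s → Real.exp 1 / 2 ≤ alphaSeq s / alphaSeq (s+1)) ∧
    (∑' s : ℕ, (binEnt (alphaSeq (s+1)) + alphaSeq (s+1))) ≤ 0.03 := by
  refine ⟨alphaSeq_one_le, fun s hs ↦ ?_, ?_⟩
  · rw [le_div_iff₀ (alphaSeq_pos _), div_mul_eq_mul_div, div_le_iff₀ two_pos]
    linarith [exp_one_mul_alphaSeq_succ_le hs]
  have hr : 2 / exp 1 ≤ 3 / 4 := two_div_exp_one_le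
  have hmajorant :=
    (hasSum_add_coe_mul_geometric 33 (r := 2 / exp 1) (by positivity) (by linarith)).mul_left 5e-5
  have hnonneg (s : ℕ) : 0 ≤ binEnt (alphaSeq (s + 1)) + alphaSeq (s + 1) :=
    add_nonneg (binEnt_nonneg (alphaSeq_pos _).le
      ((alphaSeq_succ_le_ten_pow_neg_four s).trans (by norm_num))) (alphaSeq_pos _).le
  have hsummable := Summable.of_nonneg_of_le hnonneg binEnt_alphaSeq_succ_add_le hmajorant.summable
  refine (hasSum_le binEnt_alphaSeq_succ_add_le hsummable.hasSum hmajorant).trans ?_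
  have hgap : 1 / 4 ≤ 1 - 2 / exp 1 := by linarith
  have hgeom : 33 / (1 - 2 / exp 1) ≤ 132 := by
    rw [div_le_iff₀ (by linarith)]; linarith
  have harith : 2 / exp 1 / (1 - 2 / exp 1) ^ 2 ≤ 3 / 4 / (1 / 4) ^ 2 :=
    div_le_div₀ (by norm_num) hr (by norm_num) (by gcongr)
  norm_num at harith ⊢
  linarith
end
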